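/- arXiv:1312.5140 — 5 statements merged into one kernel-verified Lean document; each statement's English description precedes it below -/
import Mathlib

section
/- If a group G acts on a set X such that every G-orbit is infinite, then for any finite subsets A, B of X there exists g in G with gA ∩ B = ∅. -/
/-!
If every translate `g • A` met `B`, then `G` would be the union of the finitely many sets
`{g | g • a = b}` with `a ∈ A`, `b ∈ B`. Each of them is empty or a left coset of the
stabilizer of `a`, so by B. H. Neumann's coset-covering lemma some stabilizer has finite index,
i.e. some orbit is finite.
-/

open Pointwise

/-- Topology of pointwise convergence on the symmetric group of a (discrete) set. -/
instance permTop (M : Type*) : TopologicalSpace (Equiv.Perm M) :=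
  letI : TopologicalSpace M := ⊥
  TopologicalSpace.induced
    (fun g => ((fun x => g x, fun x => g.symm x) : (M → M) × (M → M))) inferInstance

/-- A topological group is Roelcke precompact if every open neighbourhood `U` of the identity
admits a finite set `E` with `G = U * E * U`. -/
def RoelckePrecompact (G : Type*) [Group G] [TopologicalSpace G] : Prop :=
  ∀ U : Set G, IsOpen U → (1 : G) ∈ U →
    ∃ E : Finset G, ∀ x : G, ∃ u₁ ∈ U, ∃ e ∈ E, ∃ u₂ ∈ U, x = u₁ * e * u₂

/-- `Y` is a union of finitely many `G`-orbits. -/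
def IsFinOrbitUnion {X : Type*} (G : Subgroup (Equiv.Perm X)) (Y : Set X) : Prop :=
  ∃ S : Finset X, Y = ⋃ a ∈ S, MulAction.orbit G a

/-- `G` acts oligomorphically on `Y`: finitely many orbits on `Yⁿ` for all `n`. -/
def Oligo {X : Type*} (G : Subgroup (Equiv.Perm X)) (Y : Set X) : Prop :=
  ∀ n : ℕ, ∃ T : Finset (Fin n → X), ∀ f : Fin n → X, (∀ i, f i ∈ Y) →
    ∃ t ∈ T, ∃ g ∈ G, ∀ i, g (t i) = f i

/-- `G` is locally oligomorphic on `X`. -/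
def LocallyOligo {X : Type*} (G : Subgroup (Equiv.Perm X)) : Prop :=
  ∀ Y : Set X, IsFinOrbitUnion G Y → Oligo G Y

/-- The pointwise stabilizer of `E` in `G ≤ Sym(M)`. -/
def ptStab {M : Type*} (G : Subgroup (Equiv.Perm M)) (E : Set M) : Subgroup (Equiv.Perm M) :=
  G ⊓ ⨅ a ∈ E, MulAction.stabilizer (Equiv.Perm M) a

/-- The algebraic closure of `E`: the union of the finite orbits of the pointwise
stabilizer of `E` in `G`. -/
def acl {M : Type*} (G : Subgroup (Equiv.Perm M)) (E : Set M) : Set M :=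
  {x | (MulAction.orbit (ptStab G E) x).Finite}

/-- The intersection of the open finite-index subgroups of a topological group. -/
def Gcirc (G : Type*) [Group G] [TopologicalSpace G] : Subgroup G :=
  ⨅ U ∈ {U : Subgroup G | IsOpen (U : Set G) ∧ U.index ≠ 0}, U

namespace MulAction

variable {G X : Type*} [Group G] [MulAction G X]

theorem orbit_finite_of_finiteIndex_stabilizer {x : X} (h : (stabilizer G x).FiniteIndex) :
    (orbit G x).Finite :=
  Set.finite_of_ncard_ne_zero (index_stabilizer G x ▸ h.index_ne_zero)

theorem exists_setOf_smul_eq_subset_leftCoset (a b : X) :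
    ∃ g₀ : G, {g : G | g • a = b} ⊆ g₀ • (stabilizer G a : Set G) := by
  by_cases h : ∃ g₀ : G, g₀ • a = b
  · obtain ⟨g₀, rfl⟩ := h
    refine ⟨g₀, fun g (hg : g • a = g₀ • a) => ⟨g₀⁻¹ * g, ?_, by simp [smul_eq_mul]⟩⟩
    simp [mem_stabilizer_iff, mul_smul, hg]
  · exact ⟨1, fun g hg => (h ⟨g, hg⟩).elim⟩

theorem exists_orbit_finite_of_iUnion_setOf_smul_eq {ι : Type*} (s : Finset ι) (a b : ι → X)
    (hcover : ⋃ i ∈ s, {g : G | g • a i = b i} = Set.univ) : ∃ i ∈ s, (orbit G (a i)).Finite := by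
  choose g₀ hg₀ using fun i => exists_setOf_smul_eq_subset_leftCoset (G := G) (a i) (b i)
  have hcosets : ⋃ i ∈ s, g₀ i • (stabilizer G (a i) : Set G) = Set.univ :=
    Set.univ_subset_iff.1 (hcover ▸ Set.biUnion_mono subset_rfl fun i _ => hg₀ i)
  obtain ⟨i, hi, hfin⟩ := Subgroup.exists_finiteIndex_of_leftCoset_cover hcosets
  exact ⟨i, hi, orbit_finite_of_finiteIndex_stabilizer hfin⟩

end MulAction

/-- **Neumann's Lemma.** If every `G`-orbit on `X` is infinite, then any two finite subsets
`A, B ⊆ X` can be separated: `gA ∩ B = ∅` for some `g ∈ G`. -/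
theorem neumann_lemma {G X : Type*} [Group G] [MulAction G X]
    (horb : ∀ x : X, (MulAction.orbit G x).Infinite)
    {A B : Set X} (hA : A.Finite) (hB : B.Finite) :
    ∃ g : G, (g • A) ∩ B = ∅ := by
  by_contra! hmeet
  obtain ⟨p, -, hfin⟩ := MulAction.exists_orbit_finite_of_iUnion_setOf_smul_eq (G := G)
    (hA.toFinset ×ˢ hB.toFinset) Prod.fst Prod.snd <| Set.eq_univ_of_forall fun g => by
      obtain ⟨_, ⟨a, ha, rfl⟩, hb⟩ := hmeet g
      exact Set.mem_biUnion (x := (a, g • a)) (by simp [ha, hb]) rfl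
  exact horb p.1 hfin
end

section
/- A group G cannot be written as a union of finitely many cosets a₁H₁ ∪ ... ∪ aₙHₙ of subgroups H₁,...,Hₙ all of infinite index. -/
open Pointwise

-- probes

/-- **B. H. Neumann's covering theorem.** A group is not the union of finitely many cosets
of subgroups of infinite index. -/
theorem neumann_covering {G : Type*} [Group G] {n : ℕ} (H : Fin n → Subgroup G)
    (a : Fin n → G) (hH : ∀ i, (H i).index = 0) :
    (⋃ i, a i • ((H i) : Set G)) ≠ Set.univ := by
  intro hcovers
  have : ⋃ i ∈ (Finset.univ : Finset (Fin n)), a i • ((H i) : Set G) = Set.univ := by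
    simpa using hcovers
  obtain ⟨k, -, hk⟩ := Subgroup.exists_finiteIndex_of_leftCoset_cover this
  exact hk.index_ne_zero (hH k)
end

section
/- Let G be a subgroup of Sym(X). Then G is Roelcke precompact (with respect to the topology of pointwise convergence) if and only if for every subset Y ⊆ X that is a union of finitely many G-orbits, G acts oligomorphically on Y, i.e., G has finitely many orbits on Yⁿ for every n. -/
open Pointwise

/-! Pointwise stabilisers `V` of finite tuples `a` form a neighbourhood basis of `1`, so Roelcke
precompactness says that every double coset space `V \ G / V` is finite. The double coset `V x V`
is determined by the `G`-orbit of the pair `(a, x • a)`, which gives one direction. Conversely,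
finiteness of `V \ G / V` gives the stabiliser of a tuple finitely many orbits on each `G`-orbit,
and adding one coordinate at a time yields finitely many orbits on `Yⁿ`. -/

open MulAction Set Topology

universe u

def FinitelyManyOrbitsOn (G : Type*) {α : Type*} [Group G] [MulAction G α] (s : Set α) : Prop :=
  ∃ T : Finset α, ∀ x ∈ s, ∃ t ∈ T, x ∈ orbit G t

namespace FinitelyManyOrbitsOn

variable {G α β : Type*} [Group G] [MulAction G α] [MulAction G β] {s : Set α}

theorem mono {s' : Set α} (h : FinitelyManyOrbitsOn G s) (hs' : s' ⊆ s) :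
    FinitelyManyOrbitsOn G s' :=
  let ⟨T, hT⟩ := h
  ⟨T, fun x hx => hT x (hs' hx)⟩

theorem image (h : FinitelyManyOrbitsOn G s) (f : α → β)
    (hf : ∀ (g : G) x, f (g • x) = g • f x) :
    FinitelyManyOrbitsOn G (f '' s) := by
  classical
  obtain ⟨T, hT⟩ := h
  refine ⟨T.image f, ?_⟩
  rintro _ ⟨x, hx, rfl⟩
  obtain ⟨t, ht, g, rfl⟩ := hT x hx
  exact ⟨f t, Finset.mem_image_of_mem f ht, g, (hf g t).symm⟩

theorem biUnion {ι : Type*} {S : Finset ι} {s : ι → Set α}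
    (h : ∀ i ∈ S, FinitelyManyOrbitsOn G (s i)) : FinitelyManyOrbitsOn G (⋃ i ∈ S, s i) := by
  classical
  choose T hT using h
  refine ⟨S.attach.biUnion fun i => T i i.2, fun x hx => ?_⟩
  obtain ⟨i, hi, hx⟩ := mem_iUnion₂.1 hx
  obtain ⟨t, ht, hxt⟩ := hT i hi x hx
  exact ⟨t, Finset.mem_biUnion.2 ⟨⟨i, hi⟩, Finset.mem_attach _ _, ht⟩, hxt⟩

/-- `(x, g • b) = g • (g⁻¹ • x, b)`, and the stabilizer of `b` moves `g⁻¹ • x` to a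
representative. -/
theorem prod {t : Set β} (hs : ∀ (g : G), ∀ x ∈ s, g • x ∈ s)
    (hstab : ∀ b : β, FinitelyManyOrbitsOn (stabilizer G b) s) (ht : FinitelyManyOrbitsOn G t) :
    FinitelyManyOrbitsOn G (s ×ˢ t) := by
  classical
  obtain ⟨T, hT⟩ := ht
  choose R hR using hstab
  refine ⟨T.biUnion fun b => (R b).image fun a => (a, b), ?_⟩
  rintro ⟨x, y⟩ ⟨hx, hy⟩
  obtain ⟨b, hb, g, rfl⟩ := hT y hy
  obtain ⟨a, ha, h, hh⟩ := hR b (g⁻¹ • x) (hs _ _ hx)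
  refine ⟨(a, b), Finset.mem_biUnion.2 ⟨b, hb, Finset.mem_image_of_mem _ ha⟩, g * h, ?_⟩
  beta_reduce at hh ⊢
  rw [Prod.smul_mk, mul_smul, mul_smul, ← Subgroup.smul_def, hh, smul_inv_smul,
    (mem_stabilizer_iff.1 h.2 : (h : G) • b = b)]

theorem of_equiv {Y : Set β} {ι κ : Type*} (e : ι ≃ κ)
    (h : FinitelyManyOrbitsOn G (univ.pi fun _ : ι => Y)) :
    FinitelyManyOrbitsOn G (univ.pi fun _ : κ => Y) :=
  (h.image (· ∘ e.symm) fun _ _ => rfl).mono fun f hf =>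
    ⟨f ∘ e, fun i _ => hf (e i) trivial, by ext; simp⟩

theorem pi_option {Y : Set β} {ι : Type*} (hY : ∀ (g : G), ∀ y ∈ Y, g • y ∈ Y)
    (hstab : ∀ t : ι → β, FinitelyManyOrbitsOn (stabilizer G t) Y)
    (h : FinitelyManyOrbitsOn G (univ.pi fun _ : ι => Y)) :
    FinitelyManyOrbitsOn G (univ.pi fun _ : Option ι => Y) := by
  refine ((prod hY hstab h).image (Equiv.piOptionEquivProd (β := fun _ => β)).symm
    fun g p => ?_).mono fun f hf => ?_
  · funext o; cases o <;> rfl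
  · exact ⟨Equiv.piOptionEquivProd f, ⟨hf none trivial, fun i _ => hf (some i) trivial⟩,
      Equiv.symm_apply_apply _ _⟩

theorem pi {Y : Set β} (hY : ∀ (g : G), ∀ y ∈ Y, g • y ∈ Y)
    (hstab : ∀ (κ : Type u) [Finite κ] (t : κ → β), FinitelyManyOrbitsOn (stabilizer G t) Y)
    (ι : Type u) [Finite ι] : FinitelyManyOrbitsOn G (univ.pi fun _ : ι => Y) := by
  induction ι using Finite.induction_empty_option with
  | of_equiv e h => exact h.of_equiv e
  | h_empty =>
    exact ⟨{isEmptyElim}, fun f _ => ⟨_, Finset.mem_singleton_self _, 1, Subsingleton.elim _ _⟩⟩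
  | h_option h => exact h.pi_option hY (hstab _)

theorem pi_prod_of_pi_sum {Y : Set β} {ι κ : Type*}
    (h : FinitelyManyOrbitsOn G (univ.pi fun _ : ι ⊕ κ => Y)) :
    FinitelyManyOrbitsOn G ((univ.pi fun _ : ι => Y) ×ˢ (univ.pi fun _ : κ => Y)) := by
  refine (h.image (Equiv.sumArrowEquivProdArrow ι κ β) fun _ _ => rfl).mono fun p hp => ?_
  refine ⟨(Equiv.sumArrowEquivProdArrow ι κ β).symm p, ?_, Equiv.apply_symm_apply _ _⟩
  rintro (i | i) -
  exacts [hp.1 i trivial, hp.2 i trivial]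

theorem exists_finset_mem_orbit {ι : Type*} {f : ι → α}
    (h : FinitelyManyOrbitsOn G (range f)) :
    ∃ E : Finset ι, ∀ i, ∃ e ∈ E, f i ∈ orbit G (f e) := by
  obtain ⟨T, hT⟩ := h
  choose τ hτT hτ using fun i => hT (f i) (mem_range_self i)
  obtain ⟨E, -, hE⟩ := exists_subset_bijOn univ τ
  have hτ_finite : (τ '' univ).Finite :=
    T.finite_toSet.subset (by rintro _ ⟨i, -, rfl⟩; exact hτT i)
  have hEfin : E.Finite := Finite.of_finite_image (hτ_finite.subset hE.image_eq.subset) hE.injOn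
  refine ⟨hEfin.toFinset, fun i => ?_⟩
  obtain ⟨e, he, hei⟩ := hE.surjOn (mem_image_of_mem τ (mem_univ i))
  refine ⟨e, hEfin.mem_toFinset.2 he, ?_⟩
  rw [orbit_eq_iff.2 (hτ e), hei]
  exact hτ i

end FinitelyManyOrbitsOn

section DoubleCosets

variable {G α β : Type*} [Group G] [MulAction G α] [MulAction G β]

theorem RoelckePrecompact.finitelyManyOrbitsOn_orbit [TopologicalSpace G]
    (hG : RoelckePrecompact G) {a : α} {b : β}
    (hab : IsOpen ((stabilizer G a ⊓ stabilizer G b : Subgroup G) : Set G)) :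
    FinitelyManyOrbitsOn (stabilizer G a) (orbit G b) := by
  classical
  obtain ⟨E, hE⟩ := hG _ hab (one_mem _)
  refine ⟨E.image (· • b), ?_⟩
  rintro _ ⟨x, rfl⟩
  obtain ⟨v₁, hv₁, e, he, v₂, hv₂, rfl⟩ := hE x
  refine ⟨e • b, Finset.mem_image_of_mem _ he, ⟨v₁, hv₁.1⟩, ?_⟩
  simp only [Subgroup.mk_smul, mul_smul, (mem_stabilizer_iff.1 hv₂.2 : v₂ • b = b)]

/-- Two elements `x, y` lie in the same double coset of `V = stabilizer G a` as soon as the pairs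
`(a, x • a)` and `(a, y • a)` are in one `G`-orbit. -/
theorem exists_finset_eq_mul_mul_of_finitelyManyOrbitsOn {a : α}
    (h : FinitelyManyOrbitsOn G (range fun x : G => (a, x • a))) :
    ∃ E : Finset G, ∀ x : G,
      ∃ v₁ ∈ stabilizer G a, ∃ e ∈ E, ∃ v₂ ∈ stabilizer G a, x = v₁ * e * v₂ := by
  obtain ⟨E, hE⟩ := h.exists_finset_mem_orbit
  refine ⟨E, fun x => ?_⟩
  obtain ⟨e, he, v, hv⟩ := hE x
  simp only [Prod.smul_mk, Prod.mk.injEq] at hv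
  refine ⟨v, hv.1, e, he, e⁻¹ * v⁻¹ * x, ?_, by group⟩
  rw [mem_stabilizer_iff, mul_smul, mul_smul, ← hv.2, inv_smul_smul, inv_smul_smul]

end DoubleCosets

theorem exists_finset_eqOn_subset_of_mem_nhds {ι Y : Type*} [TopologicalSpace Y] {f : ι → Y}
    {t : Set (ι → Y)} (ht : t ∈ 𝓝 f) : ∃ I : Finset ι, {g | EqOn g f I} ⊆ t := by
  rw [nhds_pi, Filter.mem_pi'] at ht
  obtain ⟨I, u, hu, hut⟩ := ht
  refine ⟨I, fun g hg => hut fun i hi => ?_⟩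
  rw [hg hi]
  exact mem_of_mem_nhds (hu i)

section PermutationGroup

variable {X : Type*} (G : Subgroup (Equiv.Perm X)) {Y : Set X}

theorem isOpen_stabilizer (x : X) : IsOpen (stabilizer G x : Set G) := by
  let _ : TopologicalSpace X := ⊥
  have : DiscreteTopology X := ⟨rfl⟩
  have hpair : Continuous fun σ : Equiv.Perm X => ((σ : X → X), (σ.symm : X → X)) :=
    continuous_induced_dom
  have hcont : Continuous fun σ : Equiv.Perm X => σ x :=
    (continuous_apply x).comp (continuous_fst.comp hpair)
  exact (hcont.comp continuous_subtype_val).isOpen_preimage {x} (isOpen_discrete _)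

theorem isOpen_stabilizer_pi {ι : Type*} [Finite ι] (t : ι → X) :
    IsOpen (stabilizer G t : Set G) := by
  have : (stabilizer G t : Set G) = ⋂ i, stabilizer G (t i) := by
    ext g
    simp [funext_iff]
  rw [this]
  exact isOpen_iInter_of_finite fun i => isOpen_stabilizer G (t i)

theorem exists_finset_stabilizer_subset {U : Set G} (hU : IsOpen U) (h1 : (1 : G) ∈ U) :
    ∃ F : Finset X, (stabilizer G ((↑) : F → X) : Set G) ⊆ U := by
  classical
  let _ : TopologicalSpace X := ⊥
  obtain ⟨W, hW, rfl⟩ := isOpen_induced_iff.1 hU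
  obtain ⟨t, ht, rfl⟩ := isOpen_induced_iff.1 hW
  have ht1 : t ∈ 𝓝 (⇑(1 : Equiv.Perm X)) ×ˢ 𝓝 (⇑(1 : Equiv.Perm X).symm) := by
    rw [← nhds_prod_eq]; exact ht.mem_nhds h1
  obtain ⟨t₁, h₁, t₂, h₂, hsub⟩ := Filter.mem_prod_iff.1 ht1
  obtain ⟨I₁, hI₁⟩ := exists_finset_eqOn_subset_of_mem_nhds h₁
  obtain ⟨I₂, hI₂⟩ := exists_finset_eqOn_subset_of_mem_nhds h₂
  refine ⟨I₁ ∪ I₂, fun g hg => ?_⟩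
  have hfix : ∀ a ∈ I₁ ∪ I₂, (g : Equiv.Perm X) a = a := fun a ha => congr_fun hg ⟨a, ha⟩
  refine hsub ⟨hI₁ fun a ha => hfix a (Finset.mem_union_left _ ha), hI₂ fun a ha => ?_⟩
  exact (Equiv.symm_apply_eq _).2 (hfix a (Finset.mem_union_right _ ha)).symm

theorem IsFinOrbitUnion.smul_mem (hY : IsFinOrbitUnion G Y) (g : G) {y : X} (hy : y ∈ Y) :
    g • y ∈ Y := by
  obtain ⟨S, rfl⟩ := hY
  obtain ⟨b, hb, hy⟩ := mem_iUnion₂.1 hy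
  exact mem_iUnion₂.2 ⟨b, hb, mem_orbit_of_mem_orbit g hy⟩

theorem RoelckePrecompact.finitelyManyOrbitsOn_pi (hG : RoelckePrecompact G)
    (hY : IsFinOrbitUnion G Y) (ι : Type*) [Finite ι] :
    FinitelyManyOrbitsOn G (univ.pi fun _ : ι => Y) := by
  refine FinitelyManyOrbitsOn.pi (fun g y hy => hY.smul_mem G g hy) (fun κ _ t => ?_) ι
  obtain ⟨S, rfl⟩ := hY
  exact FinitelyManyOrbitsOn.biUnion fun b _ => hG.finitelyManyOrbitsOn_orbit
    ((isOpen_stabilizer_pi G t).inter (isOpen_stabilizer G b))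

theorem oligo_iff : Oligo G Y ↔ ∀ n, FinitelyManyOrbitsOn G (univ.pi fun _ : Fin n => Y) := by
  simp only [Oligo, FinitelyManyOrbitsOn, mem_univ_pi, mem_orbit_iff, Subtype.exists,
    funext_iff, Pi.smul_apply, Subgroup.mk_smul, Equiv.Perm.smul_def, exists_prop]

theorem Oligo.finitelyManyOrbitsOn_pi (h : Oligo G Y) (ι : Type*) [Finite ι] :
    FinitelyManyOrbitsOn G (univ.pi fun _ : ι => Y) :=
  ((oligo_iff G).1 h (Nat.card ι)).of_equiv (Finite.equivFin ι).symm

theorem roelckePrecompact_of_oligo (h : ∀ F : Finset X, Oligo G (⋃ a ∈ F, orbit G a)) :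
    RoelckePrecompact G := by
  intro U hU h1
  obtain ⟨F, hF⟩ := exists_finset_stabilizer_subset G hU h1
  have hpairs :
      FinitelyManyOrbitsOn G (range fun x : G => (((↑) : F → X), x • ((↑) : F → X))) := by
    refine ((h F).finitelyManyOrbitsOn_pi G (F ⊕ F)).pi_prod_of_pi_sum.mono ?_
    rintro _ ⟨x, rfl⟩
    exact ⟨fun a _ => mem_biUnion a.2 (mem_orbit_self _),
      fun a _ => mem_biUnion a.2 (mem_orbit _ x)⟩
  obtain ⟨E, hE⟩ := exists_finset_eq_mul_mul_of_finitelyManyOrbitsOn hpairs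
  refine ⟨E, fun x => ?_⟩
  obtain ⟨v₁, hv₁, e, he, v₂, hv₂, hx⟩ := hE x
  exact ⟨v₁, hF hv₁, e, he, v₂, hF hv₂, hx⟩

end PermutationGroup

/-- `G ≤ Sym(X)` is Roelcke precompact iff it acts oligomorphically on every union of
finitely many of its orbits. -/
theorem roelckePrecompact_iff_locallyOligo {X : Type*} (G : Subgroup (Equiv.Perm X)) :
    RoelckePrecompact G ↔ ∀ Y : Set X, IsFinOrbitUnion G Y → Oligo G Y :=
  ⟨fun hG _ hY => (oligo_iff G).2 fun n => hG.finitelyManyOrbitsOn_pi G hY (Fin n),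
    fun h => roelckePrecompact_of_oligo G fun F => h _ ⟨F, rfl⟩⟩
end

section
/- Let G ≤ Sym(X) with X countable and G closed and locally oligomorphic. Then G has only countably many open subgroups. -/
open Pointwise

/-!
An open subgroup `U` of `G` contains the pointwise stabiliser `K` of some finite set `A`, and a
subgroup containing `K` is a union of `(K, K)`-double cosets, so it is determined by which of
them it contains. The double coset of `g` is determined by the `G`-orbit of the tuple `(A, g A)`,
and local oligomorphy gives only finitely many such orbits. Hence each of the countably many
finite sets `A` accounts for only finitely many open subgroups.
-/

open Filter Topology MulAction

section DoubleCoset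

variable {H : Type*} [Group H]

lemma Subgroup.mem_iff_doubleCoset_mk_mem_image {K U : Subgroup H} (hKU : K ≤ U) (g : H) :
    g ∈ U ↔ DoubleCoset.mk K K g ∈ DoubleCoset.mk K K '' (U : Set H) := by
  refine ⟨fun hg => ⟨g, hg, rfl⟩, ?_⟩
  rintro ⟨g', hg', hmk⟩
  obtain ⟨k₁, hk₁, k₂, hk₂, rfl⟩ := (DoubleCoset.eq K K g' g).1 hmk
  exact U.mul_mem (U.mul_mem (hKU hk₁) hg') (hKU hk₂)

lemma Subgroup.finite_setOf_le_of_finite_doubleCoset (K : Subgroup H)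
    [Finite (DoubleCoset.Quotient (K : Set H) K)] : {U : Subgroup H | K ≤ U}.Finite := by
  refine Set.Finite.of_finite_image (f := fun U : Subgroup H => DoubleCoset.mk K K '' U)
    (Set.toFinite _) fun U₁ hU₁ U₂ hU₂ himage => SetLike.ext fun g => ?_
  rw [Subgroup.mem_iff_doubleCoset_mk_mem_image hU₁,
    Subgroup.mem_iff_doubleCoset_mk_mem_image hU₂]
  exact Eq.to_iff (congrArg (DoubleCoset.mk K K g ∈ ·) himage)

end DoubleCoset

lemma doubleCoset_mk_fixingSubgroup_eq {M α : Type*} [Group M] [MulAction M α]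
    {s : Set α} {g₁ g₂ u : M} (hu : u ∈ fixingSubgroup M s)
    (hmap : ∀ x ∈ s, u • g₁ • x = g₂ • x) :
    DoubleCoset.mk (fixingSubgroup M s) (fixingSubgroup M s) g₁ =
      DoubleCoset.mk (fixingSubgroup M s) (fixingSubgroup M s) g₂ := by
  refine (DoubleCoset.eq _ _ _ _).2 ⟨u, hu, (u * g₁)⁻¹ * g₂, ?_, by group⟩
  refine (mem_fixingSubgroup_iff M).2 fun x hx => ?_
  rw [mul_smul, ← hmap x hx, ← mul_smul u, inv_smul_smul]

section PermTopology

variable {X : Type*}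

lemma Equiv.Perm.exists_finset_fixingSubgroup_subset {U : Set (Equiv.Perm X)}
    (hU : U ∈ 𝓝 (1 : Equiv.Perm X)) :
    ∃ A : Finset X, (fixingSubgroup (Equiv.Perm X) (A : Set X) : Set (Equiv.Perm X)) ⊆ U := by
  classical
  let _ : TopologicalSpace X := ⊥
  have : DiscreteTopology X := ⟨rfl⟩
  rw [nhds_induced, nhds_prod_eq] at hU
  obtain ⟨W, hW, hWU⟩ := Filter.mem_comap.1 hU
  obtain ⟨W₁, hW₁, W₂, hW₂, hW⟩ := mem_prod_iff.1 hW
  rw [nhds_pi, mem_pi'] at hW₁ hW₂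
  obtain ⟨I₁, t₁, ht₁, hI₁⟩ := hW₁
  obtain ⟨I₂, t₂, ht₂, hI₂⟩ := hW₂
  refine ⟨I₁ ∪ I₂, fun g hg => hWU (hW ⟨hI₁ fun i hi => ?_, hI₂ fun i hi => ?_⟩)⟩
  all_goals
    have hfix : g i = i := (mem_fixingSubgroup_iff _).1 hg i (by simp [hi])
  · simpa [hfix] using mem_of_mem_nhds (ht₁ i)
  · show g.symm i ∈ t₂ i
    rw [(Equiv.symm_apply_eq g).2 hfix.symm]
    exact mem_of_mem_nhds (ht₂ i)

lemma Subgroup.exists_finset_fixingSubgroup_le_of_isOpen {G : Subgroup (Equiv.Perm X)}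
    {U : Subgroup G} (hU : IsOpen (U : Set G)) :
    ∃ A : Finset X, fixingSubgroup G (A : Set X) ≤ U := by
  have hU1 : (U : Set G) ∈ 𝓝 (1 : G) := hU.mem_nhds U.one_mem
  rw [nhds_subtype] at hU1
  obtain ⟨V, hV, hVU⟩ := Filter.mem_comap.1 hU1
  obtain ⟨A, hA⟩ := Equiv.Perm.exists_finset_fixingSubgroup_subset hV
  refine ⟨A, fun g hg => hVU (hA ((mem_fixingSubgroup_iff _).2 fun x hx => ?_))⟩
  exact (mem_fixingSubgroup_iff G).1 hg x hx

end PermTopology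

lemma Oligo.finite_doubleCoset_fixingSubgroup {X : Type*} {G : Subgroup (Equiv.Perm X)}
    (A : Finset X) (holig : Oligo G (⋃ a ∈ A, orbit G a)) :
    Finite (DoubleCoset.Quotient (fixingSubgroup G (A : Set X) : Set G)
      (fixingSubgroup G (A : Set X))) := by
  classical
  set K := fixingSubgroup G (A : Set X)
  let a : Fin A.card → X := fun i => A.equivFin.symm i
  have ha : ∀ x ∈ A, ∃ i, a i = x := fun x hx => ⟨A.equivFin ⟨x, hx⟩, by simp [a]⟩
  have haA : ∀ i, a i ∈ A := fun i => (A.equivFin.symm i).2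
  let τ : G → Fin (A.card + A.card) → X := fun g => Fin.append a fun i => g • a i
  have hτ : ∀ g i, τ g i ∈ ⋃ a ∈ A, orbit G a := by
    intro g i
    induction i using Fin.addCases with
    | left j =>
      simp only [τ, Fin.append_left]
      exact Set.mem_biUnion (haA j) (mem_orbit_self (a j) : a j ∈ orbit G (a j))
    | right j =>
      simp only [τ, Fin.append_right]
      exact Set.mem_biUnion (haA j) (mem_orbit (a j) g)
  obtain ⟨T, hT⟩ := holig (A.card + A.card)
  choose t ht w hwG hw using fun g => hT (τ g) (hτ g)
  have hsame : ∀ g₁ g₂, t g₁ = t g₂ →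
      DoubleCoset.mk K K g₁ = DoubleCoset.mk K K g₂ := by
    intro g₁ g₂ h
    let u : G := ⟨w g₂ * (w g₁)⁻¹, G.mul_mem (hwG g₂) (G.inv_mem (hwG g₁))⟩
    have hu : ∀ i, u • τ g₁ i = τ g₂ i := by
      intro i
      rw [← hw g₁ i, ← hw g₂ i, h]
      simp [u, Subgroup.smul_def]
    refine doubleCoset_mk_fixingSubgroup_eq (u := u)
      ((mem_fixingSubgroup_iff G).2 fun x hx => ?_) fun x hx => ?_
    all_goals obtain ⟨i, rfl⟩ := ha x hx
    · simpa only [τ, Fin.append_left] using hu (Fin.castAdd _ i)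
    · simpa only [τ, Fin.append_right] using hu (Fin.natAdd _ i)
  exact Finite.of_injective (fun q => (⟨t q.out, ht _⟩ : T)) fun q₁ q₂ h => by
    simpa [DoubleCoset.out_eq'] using hsame _ _ (congrArg Subtype.val h)

theorem countable_open_subgroups_general {X : Type*} [Countable X] (G : Subgroup (Equiv.Perm X))
    (holig : LocallyOligo G) :
    {U : Subgroup G | IsOpen (U : Set G)}.Countable := by
  have hcover : {U : Subgroup G | IsOpen (U : Set G)} ⊆
      ⋃ A : Finset X, {U : Subgroup G | fixingSubgroup G (A : Set X) ≤ U} := fun U hU =>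
    Set.mem_iUnion.2 (Subgroup.exists_finset_fixingSubgroup_le_of_isOpen hU)
  refine (Set.countable_iUnion fun A => ?_).mono hcover
  have := (holig _ ⟨A, rfl⟩).finite_doubleCoset_fixingSubgroup A
  exact (Subgroup.finite_setOf_le_of_finite_doubleCoset _).countable

/-- A closed, locally oligomorphic permutation group on a countable set has only countably
many open subgroups. -/
theorem countable_open_subgroups {X : Type*} [Countable X] (G : Subgroup (Equiv.Perm X))
    (hclosed : IsClosed (G : Set (Equiv.Perm X))) (holig : LocallyOligo G) :
    {U : Subgroup G | IsOpen (U : Set G)}.Countable :=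
  countable_open_subgroups_general G holig
end

section
/- Let G ≤ Sym(M) be closed and locally oligomorphic on a countable set M, and let E ⊆ M be finite. Let acl(E) denote the union of the finite orbits of the pointwise stabilizer G_E on M. Then the pointwise stabilizer G_{acl(E)} is locally oligomorphic on M and has no finite orbits on M \ acl(E). -/
open Pointwise

/-!
Exhaust `acl(E)` by finite `G_E`-invariant sets `F₀ ⊆ F₁ ⊆ ⋯` containing `E`, so that
`G_{acl(E)} = ⋂ₙ G_{Fₙ}` is the intersection of a decreasing chain of closed subgroups, each
normalised by `G_E`. Fix a finite union `W` of `G`-orbits and a length `l`. Because `G_E` is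
oligomorphic on `W` and normalises every `G_{Fₙ}`, the relation "`u`, `v` lie in one
`G_{Fₙ}`-orbit" on `Wˡ` is read off finitely many `G_E`-orbit representatives, so it stabilises
from some `N` on. This gives the "forth" step of a back-and-forth construction over the countable
set `M`, and closedness of the `G_{Fₙ}` puts the limit permutation in `G_{acl(E)}`: on `Wˡ` the
orbits of `G_{acl(E)}` are those of `G_{F_N}`. Since `F_N` is finite, `G_{F_N}` is oligomorphic on
`W`; and a finite `G_{acl(E)}`-orbit of `x` would be a finite `G_{F_N}`-orbit, which with
`F_N ⊆ acl(E)` makes the `G_E`-orbit of `x` finite, i.e. `x ∈ acl(E)`.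
-/

open MulAction Set Function Equiv

section GroupActions

variable {G α : Type*} [Group G] [MulAction G α]

theorem mem_orbit_subgroup_iff {K : Subgroup G}
    {x y : α} : y ∈ orbit K x ↔ ∃ g ∈ K, g • x = y :=
  ⟨fun ⟨g, hg⟩ => ⟨g, g.2, hg⟩, fun ⟨g, hgK, hg⟩ => ⟨⟨g, hgK⟩, hg⟩⟩

theorem orbit_subset_orbit_of_le {K L : Subgroup G}
    (hKL : K ≤ L) (x : α) : orbit K x ⊆ orbit L x := fun _ hy =>
  let ⟨g, hgK, hg⟩ := mem_orbit_subgroup_iff.mp hy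
  mem_orbit_subgroup_iff.mpr ⟨g, hKL hgK, hg⟩

theorem finite_orbit_of_finite_orbit_inf_stabilizer {L : Subgroup G} {a x : α}
    (ha : (orbit L a).Finite) (hx : (orbit (L ⊓ stabilizer G a : Subgroup G) x).Finite) :
    (orbit L x).Finite := by
  have hrep : ∀ b ∈ orbit L a, ∃ g ∈ L, g • a = b := fun _ => mem_orbit_subgroup_iff.mp
  choose! σ hσL hσa using hrep
  refine (ha.biUnion fun b _ => hx.image (σ b • ·)).subset fun y hy => ?_
  obtain ⟨g, hgL, rfl⟩ := mem_orbit_subgroup_iff.mp hy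
  have hga : g • a ∈ orbit L a := mem_orbit_subgroup_iff.mpr ⟨g, hgL, rfl⟩
  refine mem_biUnion hga ⟨((σ (g • a))⁻¹ * g) • x, mem_orbit_subgroup_iff.mpr ⟨_, ?_, rfl⟩, ?_⟩
  · refine Subgroup.mem_inf.mpr ⟨mul_mem (inv_mem (hσL _ hga)) hgL, ?_⟩
    rw [mem_stabilizer_iff, mul_smul, inv_smul_eq_iff, hσa _ hga]
  · simp only [smul_smul, mul_inv_cancel_left]

theorem smul_mem_orbit_smul_of_mem_normalizer {K : Subgroup G} {c : G}
    (hc : c ∈ Subgroup.normalizer (K : Set G)) {x y : α} (h : y ∈ orbit K x) :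
    c • y ∈ orbit K (c • x) := by
  obtain ⟨g, hg, rfl⟩ := mem_orbit_subgroup_iff.mp h
  refine mem_orbit_subgroup_iff.mpr ⟨c * g * c⁻¹, (Subgroup.mem_normalizer_iff.mp hc g).mp hg, ?_⟩
  simp only [smul_smul, inv_mul_cancel_right]

theorem smul_mem_orbit_smul_iff_of_mem_normalizer {K : Subgroup G} {c : G}
    (hc : c ∈ Subgroup.normalizer (K : Set G)) {x y : α} :
    c • y ∈ orbit K (c • x) ↔ y ∈ orbit K x :=
  ⟨fun h => by simpa using smul_mem_orbit_smul_of_mem_normalizer (inv_mem hc) h,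
    smul_mem_orbit_smul_of_mem_normalizer hc⟩

end GroupActions

section PermGroups

variable {M : Type*}

theorem mem_orbit_pi_iff {l : ℕ} {K : Subgroup (Perm M)} {u v : Fin l → M} :
    v ∈ orbit K u ↔ ∃ g ∈ K, ∀ i, g (u i) = v i := by
  simp only [mem_orbit_subgroup_iff, funext_iff, Pi.smul_apply, Perm.smul_def]

theorem mem_orbit_get_iff {K : Subgroup (Perm M)} {L : List (M × M)} :
    (fun i => (L.get i).2) ∈ orbit K (fun i => (L.get i).1) ↔
      ∃ g ∈ K, ∀ pq ∈ L, g pq.1 = pq.2 := by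
  simp only [mem_orbit_pi_iff, List.forall_mem_iff_get]

theorem apply_mem_orbit {K : Subgroup (Perm M)} {c : Perm M} {x y : M} (hc : c ∈ K)
    (hx : x ∈ orbit K y) : c x ∈ orbit K y := by
  obtain ⟨g, hg, rfl⟩ := mem_orbit_subgroup_iff.mp hx
  exact mem_orbit_subgroup_iff.mpr ⟨c * g, mul_mem hc hg, rfl⟩

theorem mem_ptStab {G : Subgroup (Perm M)} {D : Set M} {g : Perm M} :
    g ∈ ptStab G D ↔ g ∈ G ∧ ∀ a ∈ D, g a = a := by
  simp [ptStab, Subgroup.mem_inf, Subgroup.mem_iInf, mem_stabilizer_iff, Perm.smul_def]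

theorem ptStab_le (G : Subgroup (Perm M)) (D : Set M) : ptStab G D ≤ G :=
  fun _ hg => (mem_ptStab.mp hg).1

theorem ptStab_anti (G : Subgroup (Perm M)) {D D' : Set M} (h : D ⊆ D') :
    ptStab G D' ≤ ptStab G D := fun _ hg =>
  mem_ptStab.mpr ⟨(mem_ptStab.mp hg).1, fun a ha => (mem_ptStab.mp hg).2 a (h ha)⟩

theorem ptStab_ptStab (G : Subgroup (Perm M)) (D D' : Set M) :
    ptStab (ptStab G D) D' = ptStab G (D ∪ D') := by
  ext g
  simp only [mem_ptStab, mem_union, or_imp, forall_and, and_assoc]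

theorem le_normalizer_ptStab {Γ G : Subgroup (Perm M)} {D : Set M} (hΓ : Γ ≤ G)
    (hD : ∀ c ∈ Γ, ∀ x ∈ D, c x ∈ D) :
    Γ ≤ Subgroup.normalizer (ptStab G D : Set (Perm M)) := by
  intro c hc g
  have hconj : ∀ c ∈ Γ, ∀ g ∈ ptStab G D, c * g * c⁻¹ ∈ ptStab G D := by
    intro c hc g hg
    refine mem_ptStab.mpr ⟨mul_mem (mul_mem (hΓ hc) (ptStab_le G D hg)) (inv_mem (hΓ hc)),
      fun a ha => ?_⟩
    have hca : c⁻¹ a ∈ D := hD _ (inv_mem hc) a ha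
    simpa [Perm.mul_apply] using congrArg c ((mem_ptStab.mp hg).2 _ hca)
  refine ⟨hconj c hc g, fun h => ?_⟩
  simpa [mul_assoc] using hconj c⁻¹ (inv_mem hc) _ h

theorem isClosed_ptStab {G : Subgroup (Perm M)} (hG : IsClosed (G : Set (Perm M)))
    (D : Set M) : IsClosed (ptStab G D : Set (Perm M)) := by
  let _ : TopologicalSpace M := ⊥
  have : DiscreteTopology M := ⟨rfl⟩
  have hpair : Continuous fun g : Perm M => ((⇑g, ⇑g.symm) : (M → M) × (M → M)) :=
    continuous_induced_dom
  have hfix (a : M) : IsClosed {g : Perm M | g a = a} :=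
    isClosed_eq ((continuous_apply a).comp (continuous_fst.comp hpair)) continuous_const
  have hD : (ptStab G D : Set (Perm M)) = (G : Set (Perm M)) ∩ ⋂ a ∈ D, {g | g a = a} := by
    ext g
    simp [mem_ptStab]
  rw [hD]
  exact hG.inter (isClosed_biInter fun a _ => hfix a)

theorem ptStab_singleton (L : Subgroup (Perm M)) (a : M) :
    ptStab L {a} = L ⊓ stabilizer (Perm M) a := by
  ext g
  simp [mem_ptStab, Subgroup.mem_inf, mem_stabilizer_iff, Perm.smul_def]

theorem finite_orbit_of_finite_orbit_ptStab {L : Subgroup (Perm M)} {F : Set M}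
    (hF : F.Finite) (hFL : ∀ b ∈ F, (orbit L b).Finite) {x : M}
    (hx : (orbit (ptStab L F) x).Finite) : (orbit L x).Finite := by
  induction F, hF using Set.Finite.induction_on generalizing L with
  | empty =>
    have : ptStab L ∅ = L := by ext g; simp [mem_ptStab]
    rwa [this] at hx
  | @insert a s _ _ ih =>
    rw [insert_eq, ← ptStab_ptStab] at hx
    have hs : ∀ b ∈ s, (orbit (ptStab L {a}) b).Finite := fun b hb =>
      (hFL b (mem_insert_of_mem a hb)).subset (orbit_subset_orbit_of_le (ptStab_le L _) b)
    have hxa := ih hs hx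
    rw [ptStab_singleton] at hxa
    exact finite_orbit_of_finite_orbit_inf_stabilizer (hFL a (mem_insert a s)) hxa

theorem mem_closure_of_forall_finset_eqOn {S : Set (Perm M)} {k : Perm M}
    (h : ∀ I : Finset M, ∃ g ∈ S, EqOn g k I) : k ∈ closure S := by
  classical
  let _ : TopologicalSpace M := ⊥
  rw [mem_closure_iff]
  intro o ho hko
  obtain ⟨V, hV, rfl⟩ := isOpen_induced_iff.mp ho
  obtain ⟨U₁, U₂, hU₁, hU₂, hk₁, hk₂, hU⟩ := isOpen_prod_iff.mp hV _ _ hko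
  obtain ⟨I₁, u₁, hu₁, hI₁⟩ := isOpen_pi_iff.mp hU₁ _ hk₁
  obtain ⟨I₂, u₂, hu₂, hI₂⟩ := isOpen_pi_iff.mp hU₂ _ hk₂
  obtain ⟨g, hgS, hg⟩ := h (I₁ ∪ I₂.image k.symm)
  refine ⟨g, hU ⟨hI₁ fun x hx => ?_, hI₂ fun x hx => ?_⟩, hgS⟩
  · have : g x = k x := hg (by simp [hx])
    simpa [this] using (hu₁ x hx).2
  · have : g.symm x = k.symm x := g.symm_apply_eq.mpr <| by
      rw [hg (by simp [hx]), Equiv.apply_symm_apply]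
    simpa [this] using (hu₂ x hx).2

end PermGroups

section OrbitUnions

variable {M : Type*} {G : Subgroup (Perm M)}

theorem IsFinOrbitUnion.apply_mem {W : Set M} (hW : IsFinOrbitUnion G W) {g : Perm M}
    (hg : g ∈ G) {x : M} (hx : x ∈ W) : g x ∈ W := by
  obtain ⟨S, rfl⟩ := hW
  simp only [mem_iUnion] at hx ⊢
  obtain ⟨a, ha, hxa⟩ := hx
  exact ⟨a, ha, apply_mem_orbit hg hxa⟩

theorem IsFinOrbitUnion.union {W W' : Set M} (hW : IsFinOrbitUnion G W)
    (hW' : IsFinOrbitUnion G W') : IsFinOrbitUnion G (W ∪ W') := by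
  classical
  obtain ⟨S, rfl⟩ := hW
  obtain ⟨S', rfl⟩ := hW'
  exact ⟨S ∪ S', (Finset.set_biUnion_union S S' _).symm⟩

theorem IsFinOrbitUnion.exists_superset {K : Subgroup (Perm M)} (hKG : K ≤ G) {Y : Set M}
    (hY : IsFinOrbitUnion K Y) : ∃ W, IsFinOrbitUnion G W ∧ Y ⊆ W := by
  obtain ⟨S, rfl⟩ := hY
  exact ⟨_, ⟨S, rfl⟩, biUnion_mono subset_rfl fun a _ => orbit_subset_orbit_of_le hKG a⟩

theorem Set.Finite.exists_isFinOrbitUnion_superset {D : Set M} (hD : D.Finite)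
    (G : Subgroup (Perm M)) : ∃ W, IsFinOrbitUnion G W ∧ D ⊆ W :=
  ⟨_, ⟨hD.toFinset, rfl⟩, fun a ha => mem_biUnion (hD.mem_toFinset.mpr ha) (mem_orbit_self a)⟩

theorem Oligo.mono {W W' : Set M} (h : Oligo G W) (hW : W' ⊆ W) : Oligo G W' := fun n =>
  let ⟨T, hT⟩ := h n
  ⟨T, fun f hf => hT f fun i => hW (hf i)⟩

/-- Tuples over `W` are moved by `G_d` exactly as the tuples extending `d` are moved by `G`. -/
theorem Oligo.ptStab_range {W : Set M} (hW : Oligo G W) {m : ℕ} (d : Fin m → M)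
    (hd : ∀ i, d i ∈ W) : Oligo (ptStab G (range d)) W := by
  intro n
  obtain ⟨T, hT⟩ := hW (m + n)
  classical
  let moveToD (t : Fin (m + n) → M) (g : Perm M) : Prop :=
    g ∈ G ∧ ∀ i, g (t (Fin.castAdd n i)) = d i
  obtain ⟨σ, hσ⟩ : ∃ σ : (Fin (m + n) → M) → Perm M, ∀ t, (∃ g, moveToD t g) → moveToD t (σ t) :=
    ⟨fun t => Classical.epsilon (moveToD t), fun _ => Classical.epsilon_spec⟩
  refine ⟨T.image fun t j => σ t (t (Fin.natAdd m j)), fun f hf => ?_⟩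
  have hdf : ∀ i, Fin.append d f i ∈ W := Fin.addCases (by simpa using hd) (by simpa using hf)
  obtain ⟨t, ht, g, hgG, hgt⟩ := hT _ hdf
  obtain ⟨hσG, hσt⟩ := hσ t ⟨g, hgG, fun i => by simpa using hgt (Fin.castAdd n i)⟩
  refine ⟨_, Finset.mem_image_of_mem _ ht, g * (σ t)⁻¹, mem_ptStab.mpr
    ⟨mul_mem hgG (inv_mem hσG), ?_⟩, fun j => by simpa using hgt (Fin.natAdd m j)⟩
  rintro _ ⟨i, rfl⟩
  simpa [← hσt i] using hgt (Fin.castAdd n i)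

theorem LocallyOligo.oligo_ptStab (hG : LocallyOligo G) {D : Set M} (hD : D.Finite)
    {W : Set M} (hW : IsFinOrbitUnion G W) : Oligo (ptStab G D) W := by
  obtain ⟨W', hW', hDW'⟩ := hD.exists_isFinOrbitUnion_superset G
  obtain ⟨m, d, rfl⟩ := hD.fin_embedding
  exact ((hG _ (hW.union hW')).ptStab_range d fun i => Or.inr (hDW' ⟨i, rfl⟩)).mono
    subset_union_left

end OrbitUnions

section Stabilization

variable {M : Type*}

/-- The relation "`u` and `v` lie in one `H n`-orbit" is `Γ`-invariant, so it is determined by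
finitely many `Γ`-orbit representatives of pairs; on these it can only shrink finitely often. -/
theorem exists_orbit_stabilization {Γ : Subgroup (Perm M)} {H : ℕ → Subgroup (Perm M)}
    (hH : Antitone H) (hΓH : ∀ n, Γ ≤ Subgroup.normalizer (H n : Set (Perm M)))
    {W : Set M} (hW : Oligo Γ W) (l : ℕ) :
    ∃ N, ∀ u v : Fin l → M, (∀ i, u i ∈ W) → (∀ i, v i ∈ W) → v ∈ orbit (H N) u →
      ∀ n, v ∈ orbit (H n) u := by
  classical
  obtain ⟨T, hT⟩ := hW (l + l)
  let left (t : Fin (l + l) → M) : Fin l → M := fun i => t (Fin.castAdd l i)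
  let right (t : Fin (l + l) → M) : Fin l → M := fun i => t (Fin.natAdd l i)
  let S (n : ℕ) := T.filter fun t => right t ∈ orbit (H n) (left t)
  have hS : Antitone S := fun m n hmn => Finset.monotone_filter_right _
    fun _ _ => (orbit_subset_orbit_of_le (hH hmn) _ ·)
  obtain ⟨N, hN⟩ := WellFoundedLT.antitone_chain_condition hS
  refine ⟨N, fun u v hu hv huv n => ?_⟩
  rcases le_total n N with hnN | hNn
  · exact orbit_subset_orbit_of_le (hH hnN) u huv
  obtain ⟨t, ht, c, hcΓ, hct⟩ := hT (Fin.append u v) <|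
    Fin.addCases (fun i => by rw [Fin.append_left]; exact hu i)
      (fun i => by rw [Fin.append_right]; exact hv i)
  have hcu : c • left t = u := funext fun i => (hct _).trans (Fin.append_left u v i)
  have hcv : c • right t = v := funext fun i => (hct _).trans (Fin.append_right u v i)
  have htN : t ∈ S N := Finset.mem_filter.mpr ⟨ht, by
    rwa [← smul_mem_orbit_smul_iff_of_mem_normalizer (hΓH N hcΓ), hcu, hcv]⟩
  rw [hN n hNn] at htN
  rw [← hcu, ← hcv, smul_mem_orbit_smul_iff_of_mem_normalizer (hΓH n hcΓ)]
  exact (Finset.mem_filter.mp htN).2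

end Stabilization

section BackAndForth

variable {M ι : Type*} {H : ι → Subgroup (Perm M)}

def Realized (H : ι → Subgroup (Perm M)) (L : List (M × M)) : Prop :=
  ∀ i, ∃ g ∈ H i, ∀ pq ∈ L, g pq.1 = pq.2

theorem Realized.of_subset {L L' : List (M × M)} (h : Realized H L) (hL' : L' ⊆ L) :
    Realized H L' := fun i =>
  let ⟨g, hg, hgL⟩ := h i
  ⟨g, hg, fun pq hpq => hgL pq (hL' hpq)⟩

theorem Realized.map_swap {L : List (M × M)} (h : Realized H L) :
    Realized H (L.map Prod.swap) := fun i => by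
  obtain ⟨g, hg, hgL⟩ := h i
  refine ⟨g⁻¹, inv_mem hg, ?_⟩
  simp only [List.mem_map, forall_exists_index, and_imp, forall_apply_eq_imp_iff₂]
  intro pq hpq
  simp [← hgL pq hpq]

theorem Realized.exists_back
    (hforth : ∀ L, Realized H L → ∀ p, ∃ q, Realized H ((p, q) :: L))
    {L : List (M × M)} (h : Realized H L) (r : M) : ∃ p, Realized H ((p, r) :: L) := by
  obtain ⟨q, hq⟩ := hforth _ h.map_swap r
  exact ⟨q, by simpa using hq.map_swap⟩

theorem Realized.exists_chain
    (hforth : ∀ L, Realized H L → ∀ p, ∃ q, Realized H ((p, q) :: L))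
    {L₀ : List (M × M)} (h₀ : Realized H L₀) (e : ℕ → M) :
    ∃ C : ℕ → List (M × M), C 0 = L₀ ∧ ∀ n, Realized H (C n) ∧ C n ⊆ C (n + 1) ∧
      (∃ y, (e n, y) ∈ C (n + 1)) ∧ ∃ x, (x, e n) ∈ C (n + 1) := by
  have : Nonempty M := ⟨e 0⟩
  have hstep : ∀ L, Realized H L → ∀ x, ∃ p q, Realized H ((p, x) :: (x, q) :: L) :=
    fun L hL x =>
      let ⟨q, hq⟩ := hforth L hL x
      let ⟨p, hp⟩ := hq.exists_back hforth x
      ⟨p, q, hp⟩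
  choose! p q hpq using hstep
  obtain ⟨C, hC₀, hC⟩ : ∃ C : ℕ → List (M × M), C 0 = L₀ ∧
      ∀ n, C (n + 1) = (p (C n) (e n), e n) :: (e n, q (C n) (e n)) :: C n :=
    ⟨fun n => Nat.rec L₀ (fun n L => (p L (e n), e n) :: (e n, q L (e n)) :: L) n,
      rfl, fun _ => rfl⟩
  have hCreal : ∀ n, Realized H (C n) := by
    intro n
    induction n with
    | zero => rwa [hC₀]
    | succ n ih => rw [hC]; exact hpq _ ih _
  refine ⟨C, hC₀, fun n => ⟨hCreal n, ?_, ⟨q (C n) (e n), ?_⟩, ⟨p (C n) (e n), ?_⟩⟩⟩ <;>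
    rw [hC]
  · exact fun pq hpq => List.mem_cons_of_mem _ (List.mem_cons_of_mem _ hpq)
  · exact List.mem_cons_of_mem _ List.mem_cons_self
  · exact List.mem_cons_self

theorem exists_subset_of_forall_exists_mem {α : Type*} {C : ℕ → List α}
    (hC : ∀ n, C n ⊆ C (n + 1)) {L : List α} (hL : ∀ a ∈ L, ∃ n, a ∈ C n) : ∃ n, L ⊆ C n := by
  have hmono : ∀ {m n}, m ≤ n → C m ⊆ C n := by
    intro m n hmn
    induction n, hmn using Nat.le_induction with
    | base => exact List.Subset.refl _
    | succ n _ ih => exact fun a ha => hC n (ih ha)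
  induction L with
  | nil => exact ⟨0, List.nil_subset _⟩
  | cons a L ih =>
    obtain ⟨m, hm⟩ := hL a List.mem_cons_self
    obtain ⟨n, hn⟩ := ih fun b hb => hL b (List.mem_cons_of_mem _ hb)
    exact ⟨max m n, List.cons_subset.mpr
      ⟨hmono (le_max_left m n) hm, fun b hb => hmono (le_max_right m n) (hn hb)⟩⟩

theorem Realized.exists_total [Countable M]
    (hforth : ∀ L, Realized H L → ∀ p, ∃ q, Realized H ((p, q) :: L))
    {L₀ : List (M × M)} (h₀ : Realized H L₀) :
    ∃ R : Set (M × M), (∀ pq ∈ L₀, pq ∈ R) ∧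
      (∀ L : List (M × M), (∀ pq ∈ L, pq ∈ R) → Realized H L) ∧
      (∀ x, ∃ y, (x, y) ∈ R) ∧ ∀ y, ∃ x, (x, y) ∈ R := by
  rcases isEmpty_or_nonempty M with hM | hM
  · refine ⟨∅, fun pq _ => isEmptyElim pq.1, fun L hL i => ⟨1, one_mem _, fun pq hpq => ?_⟩,
      isEmptyElim, isEmptyElim⟩
    exact (hL pq hpq).elim
  obtain ⟨e, he⟩ := exists_surjective_nat M
  obtain ⟨C, hC₀, hC⟩ := h₀.exists_chain hforth e
  refine ⟨{pq | ∃ n, pq ∈ C n}, fun pq hpq => ⟨0, hC₀ ▸ hpq⟩, fun L hL => ?_, fun x => ?_,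
    fun y => ?_⟩
  · obtain ⟨n, hn⟩ := exists_subset_of_forall_exists_mem (fun n => (hC n).2.1) hL
    exact (hC n).1.of_subset hn
  · obtain ⟨n, rfl⟩ := he x
    obtain ⟨y, hy⟩ := (hC n).2.2.1
    exact ⟨y, n + 1, hy⟩
  · obtain ⟨n, rfl⟩ := he y
    obtain ⟨x, hx⟩ := (hC n).2.2.2
    exact ⟨x, n + 1, hx⟩

theorem exists_perm_of_realized [Nonempty ι] (hH : ∀ i, IsClosed (H i : Set (Perm M)))
    {R : Set (M × M)} (hR : ∀ L : List (M × M), (∀ pq ∈ L, pq ∈ R) → Realized H L)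
    (hdom : ∀ x, ∃ y, (x, y) ∈ R) (hcod : ∀ y, ∃ x, (x, y) ∈ R) :
    ∃ k : Perm M, (∀ i, k ∈ H i) ∧ ∀ pq ∈ R, k pq.1 = pq.2 := by
  obtain ⟨i₀⟩ := ‹Nonempty ι›
  have hpair : ∀ {pq pq'}, pq ∈ R → pq' ∈ R → ∃ g : Perm M, g pq.1 = pq.2 ∧ g pq'.1 = pq'.2 := by
    intro pq pq' hpq hpq'
    obtain ⟨g, -, hg⟩ := hR [pq, pq'] (by simp [hpq, hpq']) i₀
    exact ⟨g, hg pq (by simp), hg pq' (by simp)⟩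
  choose f hf using hdom
  have hgraph : ∀ pq ∈ R, f pq.1 = pq.2 := fun pq hpq => by
    obtain ⟨g, hg, hg'⟩ := hpair (hf pq.1) hpq
    exact hg.symm.trans hg'
  have hf_bij : Bijective f := by
    refine ⟨fun x x' hxx' => ?_, fun y => ?_⟩
    · obtain ⟨g, hg, hg'⟩ := hpair (hf x) (hf x')
      exact g.injective (by simp only at hg hg'; rw [hg, hg', hxx'])
    · obtain ⟨x, hx⟩ := hcod y
      exact ⟨x, hgraph _ hx⟩
  let k := Equiv.ofBijective f hf_bij
  refine ⟨k, fun i => ?_, hgraph⟩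
  rw [← SetLike.mem_coe, ← (hH i).closure_eq]
  refine mem_closure_of_forall_finset_eqOn fun I => ?_
  obtain ⟨g, hg, hgk⟩ := hR (I.toList.map fun x => (x, f x)) (by simp [hf]) i
  exact ⟨g, hg, fun x hx => hgk (x, f x) (by simpa using hx)⟩

theorem Realized.exists_perm [Countable M] [Nonempty ι] (hH : ∀ i, IsClosed (H i : Set (Perm M)))
    (hforth : ∀ L, Realized H L → ∀ p, ∃ q, Realized H ((p, q) :: L))
    {L : List (M × M)} (h : Realized H L) :
    ∃ k : Perm M, (∀ i, k ∈ H i) ∧ ∀ pq ∈ L, k pq.1 = pq.2 :=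
  let ⟨_, hLR, hR, hdom, hcod⟩ := h.exists_total hforth
  let ⟨k, hk, hkR⟩ := exists_perm_of_realized hH hR hdom hcod
  ⟨k, hk, fun pq hpq => hkR pq (hLR pq hpq)⟩

end BackAndForth

section AlgebraicClosure

variable {M : Type*} {G : Subgroup (Perm M)} {E : Set M}

theorem subset_acl : E ⊆ acl G E := fun a ha =>
  (finite_singleton a).subset fun _ hy =>
    let ⟨_, hg, hga⟩ := mem_orbit_subgroup_iff.mp hy
    hga ▸ (mem_ptStab.mp hg).2 a ha

theorem orbit_subset_acl {x : M} (hx : x ∈ acl G E) : orbit (ptStab G E) x ⊆ acl G E :=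
  fun _ hy => show (orbit _ _).Finite by rwa [orbit_eq_iff.mpr hy]

/-- The sets `Fₙ` of the sketch above, built from an injection `f : M → ℕ`. -/
def aclApprox (G : Subgroup (Perm M)) (E : Set M) (f : M → ℕ) (n : ℕ) : Set M :=
  E ∪ ⋃ y ∈ acl G E ∩ f ⁻¹' Iic n, orbit (ptStab G E) y

variable {f : M → ℕ}

theorem aclApprox_finite (hf : Injective f) (hE : E.Finite) (n : ℕ) :
    (aclApprox G E f n).Finite :=
  hE.union <| (((finite_Iic n).preimage hf.injOn).subset inter_subset_right).biUnion
    fun _ hy => hy.1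

theorem aclApprox_mono : Monotone (aclApprox G E f) := fun _ _ hmn =>
  union_subset_union_right _ <| biUnion_mono
    (inter_subset_inter_right _ (preimage_mono (Iic_subset_Iic.mpr hmn))) fun _ _ => subset_rfl

theorem aclApprox_subset_acl (n : ℕ) : aclApprox G E f n ⊆ acl G E :=
  union_subset subset_acl <| iUnion₂_subset fun _ hy => orbit_subset_acl hy.1

theorem apply_mem_aclApprox {c : Perm M} (hc : c ∈ ptStab G E) {n : ℕ} {x : M}
    (hx : x ∈ aclApprox G E f n) : c x ∈ aclApprox G E f n := by
  rcases hx with hxE | hx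
  · exact Or.inl (((mem_ptStab.mp hc).2 x hxE).symm ▸ hxE)
  · obtain ⟨y, hy, hxy⟩ := mem_iUnion₂.mp hx
    exact Or.inr (mem_iUnion₂.mpr ⟨y, hy, apply_mem_orbit hc hxy⟩)

theorem mem_ptStab_acl_of_forall {k : Perm M} (hk : ∀ n, k ∈ ptStab G (aclApprox G E f n)) :
    k ∈ ptStab G (acl G E) := by
  refine mem_ptStab.mpr ⟨ptStab_le G _ (hk 0), fun x hx => ?_⟩
  exact (mem_ptStab.mp (hk (f x))).2 x
    (Or.inr (mem_iUnion₂.mpr ⟨x, ⟨hx, show f x ≤ f x from le_rfl⟩, mem_orbit_self x⟩))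

theorem exists_orbit_stabilization_aclApprox (hG : LocallyOligo G) (hE : E.Finite)
    {W : Set M} (hW : IsFinOrbitUnion G W) (l : ℕ) :
    ∃ N, ∀ u v : Fin l → M, (∀ i, u i ∈ W) → (∀ i, v i ∈ W) →
      v ∈ orbit (ptStab G (aclApprox G E f N)) u →
      ∀ n, v ∈ orbit (ptStab G (aclApprox G E f n)) u :=
  exists_orbit_stabilization (fun _ _ hmn => ptStab_anti G (aclApprox_mono hmn))
    (fun _ => le_normalizer_ptStab (ptStab_le G E) fun _ hc _ => apply_mem_aclApprox hc)
    (hG.oligo_ptStab hE hW) l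

theorem realized_aclApprox_forth (hG : LocallyOligo G) (hE : E.Finite)
    {L : List (M × M)} (hL : Realized (fun n => ptStab G (aclApprox G E f n)) L) (p : M) :
    ∃ q, Realized (fun n => ptStab G (aclApprox G E f n)) ((p, q) :: L) := by
  obtain ⟨W, hW, hLW⟩ := (List.finite_toSet (p :: L.map Prod.fst)).exists_isFinOrbitUnion_superset G
  obtain ⟨N, hN⟩ := exists_orbit_stabilization_aclApprox (f := f) hG hE hW (L.length + 1)
  obtain ⟨g, hg, hgL⟩ := hL N
  refine ⟨g p, fun n => mem_orbit_get_iff.mp ?_⟩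
  set L' := (p, g p) :: L
  have hgL' : ∀ pq ∈ L', g pq.1 = pq.2 := List.forall_mem_cons.mpr ⟨rfl, hgL⟩
  have hu : ∀ i, (L'.get i).1 ∈ W := fun i =>
    hLW (List.mem_map_of_mem (f := Prod.fst) (List.get_mem L' i))
  refine hN _ _ hu (fun i => ?_) (mem_orbit_get_iff.mpr ⟨g, hg, hgL'⟩) n
  rw [← hgL' _ (List.get_mem _ _)]
  exact hW.apply_mem (ptStab_le G _ hg) (hu i)

theorem exists_finite_subset_acl_orbit_subset [Countable M] (hclosed : IsClosed (G : Set (Perm M)))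
    (hG : LocallyOligo G) (hE : E.Finite) {W : Set M} (hW : IsFinOrbitUnion G W) (l : ℕ) :
    ∃ F : Set M, F.Finite ∧ E ⊆ F ∧ F ⊆ acl G E ∧ ∀ u v : Fin l → M, (∀ i, u i ∈ W) →
      (∀ i, v i ∈ W) → v ∈ orbit (ptStab G F) u → v ∈ orbit (ptStab G (acl G E)) u := by
  obtain ⟨f, hf⟩ := Countable.exists_injective_nat M
  obtain ⟨N, hN⟩ := exists_orbit_stabilization_aclApprox (f := f) hG hE hW l
  refine ⟨aclApprox G E f N, aclApprox_finite hf hE N, subset_union_left,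
    aclApprox_subset_acl N, fun u v hu hv huv => ?_⟩
  have hreal : Realized (fun n => ptStab G (aclApprox G E f n)) (List.ofFn fun i => (u i, v i)) :=
    fun n => by simpa [mem_orbit_pi_iff] using hN u v hu hv huv n
  obtain ⟨k, hk, hkuv⟩ := hreal.exists_perm (fun _ => isClosed_ptStab hclosed _)
    fun _ hL p => realized_aclApprox_forth hG hE hL p
  exact mem_orbit_pi_iff.mpr ⟨k, mem_ptStab_acl_of_forall hk, fun i =>
    hkuv (u i, v i) (List.mem_ofFn.mpr ⟨i, rfl⟩)⟩

theorem locallyOligo_ptStab_acl [Countable M] (hclosed : IsClosed (G : Set (Perm M)))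
    (hG : LocallyOligo G) (hE : E.Finite) : LocallyOligo (ptStab G (acl G E)) := by
  intro Y hY n
  obtain ⟨W, hW, hYW⟩ := hY.exists_superset (ptStab_le G _)
  obtain ⟨F, hF, -, -, hFacl⟩ := exists_finite_subset_acl_orbit_subset hclosed hG hE hW n
  obtain ⟨T, hT⟩ := hG.oligo_ptStab hF hW n
  refine ⟨T, fun v hv => ?_⟩
  obtain ⟨u, hu, g, hg, hguv⟩ := hT v fun i => hYW (hv i)
  have huW : ∀ i, u i ∈ W := fun i => by
    simpa [← hguv i] using hW.apply_mem (inv_mem (ptStab_le G F hg)) (hYW (hv i))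
  exact ⟨u, hu, mem_orbit_pi_iff.mp <| hFacl u v huW (fun i => hYW (hv i))
    (mem_orbit_pi_iff.mpr ⟨g, hg, hguv⟩)⟩

theorem infinite_orbit_ptStab_acl [Countable M] (hclosed : IsClosed (G : Set (Perm M)))
    (hG : LocallyOligo G) (hE : E.Finite) {x : M} (hx : x ∉ acl G E) :
    (orbit (ptStab G (acl G E)) x).Infinite := by
  intro hfin
  obtain ⟨F, hF, hEF, hFacl, hForb⟩ :=
    exists_finite_subset_acl_orbit_subset hclosed hG hE (W := orbit G x) ⟨{x}, by simp⟩ 1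
  have hsub : orbit (ptStab G F) x ⊆ orbit (ptStab G (acl G E)) x := fun y hy => by
    obtain ⟨g, hg, rfl⟩ := mem_orbit_subgroup_iff.mp hy
    obtain ⟨k, hk, hkx⟩ := mem_orbit_pi_iff.mp <| hForb (fun _ => x) (fun _ => g x)
      (fun _ => mem_orbit_self x) (fun _ => apply_mem_orbit (ptStab_le G F hg) (mem_orbit_self x))
      (mem_orbit_pi_iff.mpr ⟨g, hg, fun _ => rfl⟩)
    exact mem_orbit_subgroup_iff.mpr ⟨k, hk, hkx 0⟩
  rw [← union_eq_self_of_subset_left hEF, ← ptStab_ptStab] at hsub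
  exact hx <| finite_orbit_of_finite_orbit_ptStab hF (fun _ hb => hFacl hb) (hfin.subset hsub)

end AlgebraicClosure

/-- If `G ≤ Sym(M)` is closed and locally oligomorphic and `E ⊆ M` is finite, then the
pointwise stabilizer of `acl(E)` is locally oligomorphic and has no finite orbits outside
`acl(E)`. -/
theorem ptStab_acl_locallyOligo {M : Type*} [Countable M] (G : Subgroup (Equiv.Perm M))
    (hclosed : IsClosed (G : Set (Equiv.Perm M))) (holig : LocallyOligo G)
    (E : Set M) (hE : E.Finite) :
    LocallyOligo (ptStab G (acl G E)) ∧
      ∀ x : M, x ∉ acl G E → (MulAction.orbit (ptStab G (acl G E)) x).Infinite :=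
  ⟨locallyOligo_ptStab_acl hclosed holig hE, fun _ => infinite_orbit_ptStab_acl hclosed holig hE⟩
end
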